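/- For every τ in the closed standard fundamental domain F = {z ∈ ℍ : |z| ≥ 1, −1/2 ≤ Re z ≤ 1/2}, one has |χ(τ) − q^{−1}| < 39960 and |ξ(τ) − q^{−1}| < 39032, where q = e^{2πiτ}. -/

import Mathlib

open Complex

noncomputable section

/-- `sigma' k n = ∑_{d ∣ n} d^k`, the sum of the k-th powers of the positive divisors of n. -/
def sigma' (k n : ℕ) : ℕ := ∑ d ∈ n.divisors, d ^ k

/-- `qpar τ = e^{2πiτ}`. -/
def qpar (τ : ℂ) : ℂ := Complex.exp (2 * Real.pi * Complex.I * τ)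

/-- The quasimodular Eisenstein series `E₂(τ) = 1 - 24 ∑_{n≥1} σ₁(n) qⁿ`. -/
def E2 (τ : ℂ) : ℂ := 1 - 24 * ∑' n : ℕ, (sigma' 1 (n + 1) : ℂ) * qpar τ ^ (n + 1)

/-- The Eisenstein series `E₄(τ) = 1 + 240 ∑_{n≥1} σ₃(n) qⁿ`. -/
def E4 (τ : ℂ) : ℂ := 1 + 240 * ∑' n : ℕ, (sigma' 3 (n + 1) : ℂ) * qpar τ ^ (n + 1)

/-- The Eisenstein series `E₆(τ) = 1 - 504 ∑_{n≥1} σ₅(n) qⁿ`. -/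
def E6 (τ : ℂ) : ℂ := 1 - 504 * ∑' n : ℕ, (sigma' 5 (n + 1) : ℂ) * qpar τ ^ (n + 1)

/-- The modular discriminant `Δ = (E₄³ - E₆²)/1728`. -/
def Δ' (τ : ℂ) : ℂ := (E4 τ ^ 3 - E6 τ ^ 2) / 1728

/-- The modular j-invariant `j = E₄³/Δ`. -/
def jinv (τ : ℂ) : ℂ := E4 τ ^ 3 / Δ' τ

/-- `χ = E₂E₄E₆/Δ`. -/
def χ' (τ : ℂ) : ℂ := E2 τ * E4 τ * E6 τ / Δ' τ

/-- `ξ = E₄E₆/Δ`. -/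
def ξ' (τ : ℂ) : ℂ := E4 τ * E6 τ / Δ' τ

/-- The almost holomorphic modular function `χ*(τ) = χ(τ) - (3/(π Im τ)) ξ(τ)`. -/
def χstar (τ : ℂ) : ℂ := χ' τ - (3 / (Real.pi * τ.im) : ℝ) * ξ' τ

/-- `τ` lies in the upper half-plane and satisfies `aτ² + bτ + c = 0` where
`a > 0` and `gcd(a,b,c) = 1`. -/
def QuadPoint (τ : ℂ) (a b c : ℤ) : Prop :=
  0 < τ.im ∧ 0 < a ∧ Int.gcd (Int.gcd a b) c = 1 ∧
    (a : ℂ) * τ ^ 2 + (b : ℂ) * τ + (c : ℂ) = 0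

/-- `τ` is a quadratic point of the upper half-plane. -/
def IsQuadratic (τ : ℂ) : Prop := ∃ a b c : ℤ, QuadPoint τ a b c

/-- `τ` is a quadratic point of discriminant `D = b² - 4ac`. -/
def HasDisc (τ : ℂ) (D : ℤ) : Prop :=
  ∃ a b c : ℤ, QuadPoint τ a b c ∧ D = b ^ 2 - 4 * a * c

/-- Membership in the closed standard fundamental domain
`F = {z ∈ ℍ : |z| ≥ 1, -1/2 ≤ Re z ≤ 1/2}`. -/
def inF (τ : ℂ) : Prop :=
  0 < τ.im ∧ 1 ≤ ‖τ‖ ∧ -(1 / 2) ≤ τ.re ∧ τ.re ≤ 1 / 2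

/-- `τ` and `τ'` lie in the same `SL₂(ℤ)`-orbit under Möbius transformations. -/
def MoebiusEquiv (τ τ' : ℂ) : Prop :=
  ∃ γ : Matrix.SpecialLinearGroup (Fin 2) ℤ,
    τ' = ((γ.1 0 0 : ℂ) * τ + (γ.1 0 1 : ℂ)) / ((γ.1 1 0 : ℂ) * τ + (γ.1 1 1 : ℂ))

/-!
On `F` one has `Im τ ≥ √3/2`, hence `|q| ≤ e^{-π√3} < 1/228`. With `σ_k(n) ≤ n^{k+1}` the divisor
series `∑ σ_k(n) qⁿ` equals `q + σ_k(2) q²` up to a geometrically summable tail, which gives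
`E₂, E₄, E₆ = 1 + O(|q|)` and `|Δ - q| ≤ 174 |q|²` with explicit constants. Since `174 |q| < 1`,
`|Δ| ≥ |q| (1 - 174 |q|)`, and both bounds follow from
`P/Δ - q⁻¹ = (q (P - 1) - (Δ - q)) / (q Δ)` with `P = E₂E₄E₆` resp. `P = E₄E₆`.
-/

lemma sigma'_le_pow_succ (k n : ℕ) : sigma' k n ≤ n ^ (k + 1) := by
  simpa only [sigma', ← ArithmeticFunction.sigma_apply] using
    ArithmeticFunction.sigma_le_pow_succ k n

lemma sigma'_one (k : ℕ) : sigma' k 1 = 1 := by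
  simp [sigma']

lemma sigma'_two (k : ℕ) : sigma' k 2 = 1 + 2 ^ k := by
  simp [sigma', Nat.prime_two.divisors]

def divisorSeries (k : ℕ) (q : ℂ) : ℂ := ∑' n : ℕ, (sigma' k (n + 1) : ℂ) * q ^ (n + 1)

lemma natCast_add_three_le (n : ℕ) : (n : ℝ) + 3 ≤ 3 * (4 / 3) ^ n := by
  have := one_add_mul_le_pow (a := (1 / 3 : ℝ)) (by norm_num) n
  norm_num at this
  linarith

lemma norm_sigma'_mul_pow_add_three_le (k n : ℕ) (q : ℂ) :
    ‖(sigma' k (n + 3) : ℂ) * q ^ (n + 3)‖ ≤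
      3 ^ (k + 1) * ‖q‖ ^ 3 * ((4 / 3) ^ (k + 1) * ‖q‖) ^ n := by
  rw [norm_mul, norm_pow, Complex.norm_natCast]
  calc (sigma' k (n + 3) : ℝ) * ‖q‖ ^ (n + 3)
      ≤ ((n : ℝ) + 3) ^ (k + 1) * ‖q‖ ^ (n + 3) := by
        gcongr
        exact_mod_cast sigma'_le_pow_succ k (n + 3)
    _ ≤ (3 * (4 / 3) ^ n) ^ (k + 1) * ‖q‖ ^ (n + 3) := by
        gcongr
        exact natCast_add_three_le n
    _ = _ := by ring

section Tail

variable (k : ℕ) {q : ℂ}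

lemma summable_norm_divisorSeries_tail (hq : (4 / 3) ^ (k + 1) * ‖q‖ < 1) :
    Summable fun n : ℕ => ‖(sigma' k (n + 3) : ℂ) * q ^ (n + 3)‖ :=
  .of_nonneg_of_le (fun _ => norm_nonneg _) (norm_sigma'_mul_pow_add_three_le k · q)
    ((summable_geometric_of_lt_one (by positivity) hq).mul_left _)

lemma divisorSeries_sub_eq_tsum (hq : (4 / 3) ^ (k + 1) * ‖q‖ < 1) :
    divisorSeries k q - q =
      (1 + 2 ^ k) * q ^ 2 + ∑' n : ℕ, (sigma' k (n + 3) : ℂ) * q ^ (n + 3) := by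
  have hs : Summable fun n : ℕ => (sigma' k (n + 1) : ℂ) * q ^ (n + 1) :=
    (summable_nat_add_iff 2).mp (summable_norm_divisorSeries_tail k hq).of_norm
  rw [divisorSeries, ← hs.sum_add_tsum_nat_add 2]
  simp only [Finset.sum_range_succ, Finset.sum_range_zero, Nat.reduceAdd, sigma'_one, sigma'_two]
  push_cast
  ring

lemma norm_tsum_divisorSeries_tail_le (hq : (4 / 3) ^ (k + 1) * ‖q‖ < 1) :
    ‖∑' n : ℕ, (sigma' k (n + 3) : ℂ) * q ^ (n + 3)‖ ≤
      3 ^ (k + 1) * ‖q‖ ^ 3 / (1 - (4 / 3) ^ (k + 1) * ‖q‖) :=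
  calc _ ≤ ∑' n : ℕ, ‖(sigma' k (n + 3) : ℂ) * q ^ (n + 3)‖ :=
        norm_tsum_le_tsum_norm (summable_norm_divisorSeries_tail k hq)
    _ ≤ ∑' n : ℕ, 3 ^ (k + 1) * ‖q‖ ^ 3 * ((4 / 3) ^ (k + 1) * ‖q‖) ^ n :=
        (summable_norm_divisorSeries_tail k hq).tsum_le_tsum
          (norm_sigma'_mul_pow_add_three_le k · q)
          ((summable_geometric_of_lt_one (by positivity) hq).mul_left _)
    _ = _ := by
        rw [tsum_mul_left, tsum_geometric_of_lt_one (by positivity) hq, ← div_eq_mul_inv]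

end Tail

section SmallNome

variable {q : ℂ}

-- `222 = 228 · 37 / 38`: the tail is at most `(38/37) 3^(k+1) |q|³` and `|q| ≤ 1/228`.
lemma norm_divisorSeries_sub_le {k : ℕ} (hk : k ≤ 5) (hq : ‖q‖ ≤ 1 / 228) :
    ‖divisorSeries k q - q‖ ≤ (1 + 2 ^ k + 3 ^ (k + 1) / 222) * ‖q‖ ^ 2 := by
  have hratio : (4 / 3 : ℝ) ^ (k + 1) * ‖q‖ ≤ 1 / 38 := calc
    _ ≤ (4 / 3 : ℝ) ^ 6 * (1 / 228) := by gcongr <;> norm_num; omega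
    _ ≤ 1 / 38 := by norm_num
  have htail := norm_tsum_divisorSeries_tail_le k (hratio.trans_lt (by norm_num))
  rw [divisorSeries_sub_eq_tsum k (hratio.trans_lt (by norm_num))]
  calc _ ≤ ‖(1 + 2 ^ k : ℂ) * q ^ 2‖ + ‖∑' n : ℕ, (sigma' k (n + 3) : ℂ) * q ^ (n + 3)‖ :=
        norm_add_le _ _
    _ ≤ (1 + 2 ^ k) * ‖q‖ ^ 2 + 3 ^ (k + 1) * ‖q‖ ^ 3 / (1 - 1 / 38) := by
        gcongr
        · rw [norm_mul, norm_pow]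
          gcongr
          exact_mod_cast (Complex.norm_natCast (1 + 2 ^ k)).le
        · exact htail.trans (by gcongr)
    _ = (1 + 2 ^ k) * ‖q‖ ^ 2 + 3 ^ (k + 1) * (38 / 37) * (‖q‖ ^ 2 * ‖q‖) := by ring
    _ ≤ (1 + 2 ^ k) * ‖q‖ ^ 2 + 3 ^ (k + 1) * (38 / 37) * (‖q‖ ^ 2 * (1 / 228)) := by gcongr
    _ = _ := by ring

lemma norm_divisorSeries_le {k : ℕ} (hk : k ≤ 5) (hq : ‖q‖ ≤ 1 / 228) :
    ‖divisorSeries k q‖ ≤ (1 + (1 + 2 ^ k + 3 ^ (k + 1) / 222) / 228) * ‖q‖ :=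
  calc ‖divisorSeries k q‖ ≤ ‖q‖ + ‖divisorSeries k q - q‖ := norm_le_norm_add_norm_sub' _ _
    _ ≤ ‖q‖ + (1 + 2 ^ k + 3 ^ (k + 1) / 222) * ‖q‖ ^ 2 := by
        gcongr; exact norm_divisorSeries_sub_le hk hq
    _ ≤ _ := by
        have : ‖q‖ ^ 2 ≤ ‖q‖ * (1 / 228) := by rw [sq]; gcongr
        have : (0 : ℝ) ≤ 1 + 2 ^ k + 3 ^ (k + 1) / 222 := by positivity
        nlinarith

end SmallNome

lemma norm_discriminant_sub_le {q : ℂ} (hq : ‖q‖ ≤ 1 / 228) :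
    ‖((1 + 240 * divisorSeries 3 q) ^ 3 - (1 - 504 * divisorSeries 5 q) ^ 2) / 1728 - q‖ ≤
      174 * ‖q‖ ^ 2 := by
  set A := divisorSeries 3 q
  set B := divisorSeries 5 q
  set r := ‖q‖
  have hA : ‖A - q‖ ≤ 47 / 5 * r ^ 2 :=
    (norm_divisorSeries_sub_le (by norm_num) hq).trans (by gcongr; norm_num)
  have hB : ‖B - q‖ ≤ 363 / 10 * r ^ 2 :=
    (norm_divisorSeries_sub_le (by norm_num) hq).trans (by gcongr; norm_num)
  have hA' : ‖A‖ ≤ 21 / 20 * r :=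
    (norm_divisorSeries_le (by norm_num) hq).trans (by gcongr; norm_num)
  have hB' : ‖B‖ ≤ 29 / 25 * r :=
    (norm_divisorSeries_le (by norm_num) hq).trans (by gcongr; norm_num)
  -- the linear terms cancel to `1728 q`, and the quadratic ones nearly cancel since `A - B = O(q²)`
  have hid : ((1 + 240 * A) ^ 3 - (1 - 504 * B) ^ 2) / 1728 - q =
      (720 * (A - q) + 1008 * (B - q) + 172800 * ((A - q - (B - q)) * (A + B))
        - 81216 * B ^ 2 + 13824000 * A ^ 3) / 1728 := by ring
  rw [hid, norm_div, RCLike.norm_ofNat, div_le_iff₀ (by norm_num)]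
  calc _ ≤ 720 * ‖A - q‖ + 1008 * ‖B - q‖ + 172800 * ((‖A - q‖ + ‖B - q‖) * (‖A‖ + ‖B‖))
        + 81216 * ‖B‖ ^ 2 + 13824000 * ‖A‖ ^ 3 := by
        refine (norm_add_le _ _).trans (add_le_add ((norm_sub_le _ _).trans
          (add_le_add (norm_add₃_le.trans ?_) ?_)) ?_) <;>
          simp only [norm_mul, norm_pow, RCLike.norm_ofNat, le_refl]
        gcongr
        exacts [norm_sub_le _ _, norm_add_le _ _]
    _ ≤ 720 * (47 / 5 * r ^ 2) + 1008 * (363 / 10 * r ^ 2)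
        + 172800 * ((47 / 5 * r ^ 2 + 363 / 10 * r ^ 2) * (21 / 20 * r + 29 / 25 * r))
        + 81216 * (29 / 25 * r) ^ 2 + 13824000 * (21 / 20 * r) ^ 3 := by gcongr
    _ ≤ 174 * r ^ 2 * 1728 := by
        have : r ^ 3 ≤ r ^ 2 * (1 / 228) := by rw [pow_succ]; gcongr
        nlinarith

lemma norm_mul_sub_one_le {R : Type*} [NormedRing R] {x y : R} {a b : ℝ}
    (hx : ‖x - 1‖ ≤ a) (hy : ‖y - 1‖ ≤ b) : ‖x * y - 1‖ ≤ (1 + a) * (1 + b) - 1 :=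
  calc ‖x * y - 1‖ = ‖(x - 1) + (y - 1) + (x - 1) * (y - 1)‖ := by congr 1; noncomm_ring
    _ ≤ ‖x - 1‖ + ‖y - 1‖ + ‖x - 1‖ * ‖y - 1‖ :=
        norm_add₃_le.trans (by gcongr; exact norm_mul_le _ _)
    _ ≤ a + b + a * b := by
        gcongr; exact (norm_nonneg _).trans hx
    _ = _ := by ring

lemma norm_div_sub_inv_le {𝕜 : Type*} [NormedField 𝕜] {P D q : 𝕜} {α β : ℝ} (hq : q ≠ 0)
    (hP : ‖P - 1‖ ≤ α * ‖q‖) (hD : ‖D - q‖ ≤ β * ‖q‖ ^ 2) (hβ : β * ‖q‖ < 1) :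
    ‖P / D - q⁻¹‖ ≤ (α + β) / (1 - β * ‖q‖) := by
  have hr : 0 < ‖q‖ := norm_pos_iff.2 hq
  have hα : 0 ≤ α := nonneg_of_mul_nonneg_left ((norm_nonneg _).trans hP) hr
  have hβ0 : 0 ≤ β := nonneg_of_mul_nonneg_left ((norm_nonneg _).trans hD) (by positivity)
  have hD' : ‖q‖ * (1 - β * ‖q‖) ≤ ‖D‖ := by
    nlinarith [norm_le_norm_add_norm_sub D q]
  have hD0 : D ≠ 0 := norm_pos_iff.1 (by nlinarith)
  have hnum : ‖q * (P - 1) - (D - q)‖ ≤ (α + β) * ‖q‖ ^ 2 :=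
    calc _ ≤ ‖q‖ * ‖P - 1‖ + ‖D - q‖ := by rw [← norm_mul]; exact norm_sub_le _ _
      _ ≤ ‖q‖ * (α * ‖q‖) + β * ‖q‖ ^ 2 := by gcongr
      _ = _ := by ring
  rw [show P / D - q⁻¹ = (q * (P - 1) - (D - q)) / (q * D) by field_simp; ring, norm_div,
    norm_mul, div_le_div_iff₀ (by positivity) (by linarith)]
  calc _ ≤ (α + β) * ‖q‖ ^ 2 * (1 - β * ‖q‖) := by gcongr
    _ = (α + β) * (‖q‖ * (‖q‖ * (1 - β * ‖q‖))) := by ring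
    _ ≤ (α + β) * (‖q‖ * ‖D‖) := by gcongr

lemma norm_qpar (τ : ℂ) : ‖qpar τ‖ = Real.exp (-(2 * Real.pi * τ.im)) := by
  simp [qpar, Complex.norm_exp]

lemma inF.three_le_four_mul_im_sq {τ : ℂ} (hτ : inF τ) : 3 ≤ 4 * τ.im ^ 2 := by
  obtain ⟨-, hnorm, hre, hre'⟩ := hτ
  nlinarith [Complex.sq_norm_sub_sq_re τ]

lemma exp_5_4412_ge_228 : 228 ≤ Real.exp 5.4412 := by
  have he : (2.7182818 : ℝ) ≤ Real.exp 1 := (Real.exp_one_gt_d9.trans' (by norm_num)).le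
  have h := Real.quadratic_le_exp_of_nonneg (x := 0.4412) (by norm_num)
  calc (228 : ℝ) ≤ 2.7182818 ^ 5 * (1 + 0.4412 + 0.4412 ^ 2 / 2) := by norm_num
    _ ≤ Real.exp 1 ^ 5 * Real.exp 0.4412 := by gcongr
    _ = Real.exp 5.4412 := by rw [← Real.exp_nat_mul, ← Real.exp_add]; norm_num

lemma inF.norm_qpar_le {τ : ℂ} (hτ : inF τ) : ‖qpar τ‖ ≤ 1 / 228 := by
  have him : 0.866 ≤ τ.im := by nlinarith [hτ.1, hτ.three_le_four_mul_im_sq]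
  have : 5.4412 ≤ 2 * Real.pi * τ.im := by nlinarith [Real.pi_gt_d6]
  rw [norm_qpar, Real.exp_neg, one_div]
  exact inv_anti₀ (by norm_num) (exp_5_4412_ge_228.trans (Real.exp_le_exp.2 this))

section FundamentalDomain

variable {τ : ℂ}

lemma inF.norm_E2_sub_one_le (hτ : inF τ) : ‖E2 τ - 1‖ ≤ 25 * ‖qpar τ‖ := by
  have h := norm_divisorSeries_le (k := 1) (by norm_num) hτ.norm_qpar_le
  change ‖1 - 24 * divisorSeries 1 (qpar τ) - 1‖ ≤ _
  rw [sub_sub_cancel_left, norm_neg, norm_mul, RCLike.norm_ofNat]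
  norm_num at h
  linarith [norm_nonneg (qpar τ)]

lemma inF.norm_E4_sub_one_le (hτ : inF τ) : ‖E4 τ - 1‖ ≤ 250 * ‖qpar τ‖ := by
  have h := norm_divisorSeries_le (k := 3) (by norm_num) hτ.norm_qpar_le
  change ‖1 + 240 * divisorSeries 3 (qpar τ) - 1‖ ≤ _
  rw [add_sub_cancel_left, norm_mul, RCLike.norm_ofNat]
  norm_num at h
  linarith [norm_nonneg (qpar τ)]

lemma inF.norm_E6_sub_one_le (hτ : inF τ) : ‖E6 τ - 1‖ ≤ 585 * ‖qpar τ‖ := by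
  have h := norm_divisorSeries_le (k := 5) (by norm_num) hτ.norm_qpar_le
  change ‖1 - 504 * divisorSeries 5 (qpar τ) - 1‖ ≤ _
  rw [sub_sub_cancel_left, norm_neg, norm_mul, RCLike.norm_ofNat]
  norm_num at h
  linarith [norm_nonneg (qpar τ)]

lemma inF.norm_Δ'_sub_qpar_le (hτ : inF τ) : ‖Δ' τ - qpar τ‖ ≤ 174 * ‖qpar τ‖ ^ 2 :=
  norm_discriminant_sub_le hτ.norm_qpar_le

end FundamentalDomain

/-- For `τ` in the closed standard fundamental domain,
`|χ(τ) - q⁻¹| < 39960` and `|ξ(τ) - q⁻¹| < 39032`. -/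
theorem weak_chi_xi_tail_bounds (τ : ℂ) (hτ : inF τ) :
    ‖χ' τ - (qpar τ)⁻¹‖ < 39960 ∧
    ‖ξ' τ - (qpar τ)⁻¹‖ < 39032 := by
  have hq0 : qpar τ ≠ 0 := Complex.exp_ne_zero _
  have hr : ‖qpar τ‖ ≤ 1 / 228 := hτ.norm_qpar_le
  have hr0 : 0 ≤ ‖qpar τ‖ := norm_nonneg _
  have hden : 9 / 38 ≤ 1 - 174 * ‖qpar τ‖ := by linarith
  have hE46 : ‖E4 τ * E6 τ - 1‖ ≤ 1500 * ‖qpar τ‖ :=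
    (norm_mul_sub_one_le hτ.norm_E4_sub_one_le hτ.norm_E6_sub_one_le).trans (by nlinarith)
  have hE246 : ‖E2 τ * E4 τ * E6 τ - 1‖ ≤ 1700 * ‖qpar τ‖ :=
    (norm_mul_sub_one_le (norm_mul_sub_one_le hτ.norm_E2_sub_one_le hτ.norm_E4_sub_one_le)
      hτ.norm_E6_sub_one_le).trans
      (by nlinarith [mul_nonneg hr0 hr0, mul_le_mul hr hr hr0 (by norm_num)])
  constructor
  · calc ‖χ' τ - (qpar τ)⁻¹‖ ≤ (1700 + 174) / (1 - 174 * ‖qpar τ‖) :=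
          norm_div_sub_inv_le hq0 hE246 hτ.norm_Δ'_sub_qpar_le (by linarith)
      _ ≤ (1700 + 174) / (9 / 38) := by gcongr
      _ < 39960 := by norm_num
  · calc ‖ξ' τ - (qpar τ)⁻¹‖ ≤ (1500 + 174) / (1 - 174 * ‖qpar τ‖) :=
          norm_div_sub_inv_le hq0 hE46 hτ.norm_Δ'_sub_qpar_le (by linarith)
      _ ≤ (1500 + 174) / (9 / 38) := by gcongr
      _ < 39032 := by norm_num
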